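/- Exponential runtime complexity: If R is a POE*-compatible TRS, then the innermost runtime complexity function satisfies rc_R(n) ∈ 2^{O(n)}; i.e., there exist constants c, d such that every call-by-value derivation starting from a basic term f(v_1,...,v_{k+l}) of size at most n has length at most c · 2^{d·n}. -/

import Mathlib

/-- Terms over signature `F` and variables `V`, with the argument positions of
each function symbol separated into normal (`nrm`) and safe (`saf`) ones. -/
inductive Tm (F V : Type) where
  | var : V → Tm F V
  | app : F → List (Tm F V) → List (Tm F V) → Tm F V

namespace Tm

/-- Values: terms built from constructors (symbols in `C`) only; constructors
have only safe argument positions. -/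
inductive IsVal {F V : Type} (C : Set F) : Tm F V → Prop where
  | app {f ss} : f ∈ C → (∀ t ∈ ss, IsVal C t) → IsVal C (Tm.app f [] ss)

/-- Constructor terms: terms built from constructors and variables only. -/
inductive IsConTm {F V : Type} (C : Set F) : Tm F V → Prop where
  | var (v : V) : IsConTm C (Tm.var v)
  | app {f ss} : f ∈ C → (∀ t ∈ ss, IsConTm C t) → IsConTm C (Tm.app f [] ss)

/-- Application of a substitution to a term. -/
def subst {F V : Type} (σ : V → Tm F V) : Tm F V → Tm F V
  | Tm.var v => σ v
  | Tm.app f ns ss => Tm.app f (ns.attach.map fun t => subst σ t.1)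
                               (ss.attach.map fun t => subst σ t.1)
  decreasing_by
    · have := List.sizeOf_lt_of_mem t.2; simp; omega
    · have := List.sizeOf_lt_of_mem t.2; simp; omega

/-- The size of a term: the number of symbols occurring in it. -/
def size {F V : Type} : Tm F V → ℕ
  | Tm.var _ => 1
  | Tm.app _ ns ss => 1 + ((ns.attach.map fun t => size t.1).sum
                            + (ss.attach.map fun t => size t.1).sum)
  decreasing_by
    · have := List.sizeOf_lt_of_mem t.2; simp; omega
    · have := List.sizeOf_lt_of_mem t.2; simp; omega

/-- `SubEq s t` : `t` is a (not necessarily proper) subterm of `s`. -/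
inductive SubEq {F V : Type} : Tm F V → Tm F V → Prop where
  | refl (t) : SubEq t t
  | nrm {f ns ss s t} : s ∈ ns → SubEq s t → SubEq (Tm.app f ns ss) t
  | saf {f ns ss s t} : s ∈ ss → SubEq s t → SubEq (Tm.app f ns ss) t

/-- `NSub s t` : `t` is a subterm of a normal argument of `s`
(the relation written `s ⊳ⁿ t`). -/
def NSub {F V : Type} (s t : Tm F V) : Prop :=
  ∃ f ns ss, s = Tm.app f ns ss ∧ ∃ u ∈ ns, SubEq u t

/-- Call-by-value rewriting for a set of rules `R`: root steps instantiate a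
rule with a substitution mapping variables to values, and rewriting is closed
under contexts. -/
inductive Rew {F V : Type} (C : Set F) (R : Set (Tm F V × Tm F V)) : Tm F V → Tm F V → Prop where
  | root {l r : Tm F V} (σ : V → Tm F V) :
      (l, r) ∈ R → (∀ v, IsVal C (σ v)) → Rew C R (subst σ l) (subst σ r)
  | ctxtN {s t f ns₁ ns₂ ss} : Rew C R s t →
      Rew C R (Tm.app f (ns₁ ++ s :: ns₂) ss) (Tm.app f (ns₁ ++ t :: ns₂) ss)
  | ctxtS {s t f ns ss₁ ss₂} : Rew C R s t →
      Rew C R (Tm.app f ns (ss₁ ++ s :: ss₂)) (Tm.app f ns (ss₁ ++ t :: ss₂))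

mutual
  /-- The POE* order `⊐` induced by a precedence `prec` and constructors `C`
  (Definition of `poe`); symbols not in `C` are the defined symbols. -/
  inductive Poe {F V : Type} (prec : F → F → Prop) (C : Set F) : Tm F V → Tm F V → Prop where
    /- clause (1), `sᵢ = t`: `t` is one of the (normal or safe) arguments -/
    | sub {f ns ss t} : t ∈ ns ++ ss → Poe prec C (Tm.app f ns ss) t
    /- clause (1), `sᵢ ⊐ t` for an argument `sᵢ` -/
    | subtrans {f ns ss u t} : u ∈ ns ++ ss → Poe prec C u t → Poe prec C (Tm.app f ns ss) t
    /- clause (2): precedence descent; normal arguments of `t` are subterms of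
       normal arguments of `s`, and `s ⊐` every safe argument of `t` -/
    | ia {f g : F} {ns ss tn ts} : f ∉ C → prec f g →
        (∀ t' ∈ tn, NSub (Tm.app f ns ss) t') →
        (∀ t' ∈ ts, Poe prec C (Tm.app f ns ss) t') →
        Poe prec C (Tm.app f ns ss) (Tm.app g tn ts)
    /- clause (3): same defined root symbol, product descent on normal
       arguments, `s ⊐` every safe argument of `t` -/
    | tsc {f : F} {ns ss tn ts} : f ∉ C →
        PoeProd prec C ns tn →
        (∀ t' ∈ ts, Poe prec C (Tm.app f ns ss) t') →
        Poe prec C (Tm.app f ns ss) (Tm.app f tn ts)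

  /-- Product extension of `⊐`: componentwise equal-or-smaller with at least
  one strict decrease. -/
  inductive PoeProd {F V : Type} (prec : F → F → Prop) (C : Set F) :
      List (Tm F V) → List (Tm F V) → Prop where
    | strict {a b as bs} : Poe prec C a b → PoeGE prec C as bs →
        PoeProd prec C (a :: as) (b :: bs)
    | cons_eq {a as bs} : PoeProd prec C as bs → PoeProd prec C (a :: as) (a :: bs)
    | cons_lt {a b as bs} : Poe prec C a b → PoeProd prec C as bs →
        PoeProd prec C (a :: as) (b :: bs)

  /-- Componentwise equal-or-smaller (w.r.t. `⊐`) lists of equal length. -/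
  inductive PoeGE {F V : Type} (prec : F → F → Prop) (C : Set F) :
      List (Tm F V) → List (Tm F V) → Prop where
    | nil : PoeGE prec C [] []
    | cons_eq {a as bs} : PoeGE prec C as bs → PoeGE prec C (a :: as) (a :: bs)
    | cons_lt {a b as bs} : Poe prec C a b → PoeGE prec C as bs →
        PoeGE prec C (a :: as) (b :: bs)
end

/-- `R` is compatible with the POE* order induced by `prec`, and is a
constructor TRS: every left-hand side has a defined root symbol and its
arguments are constructor terms. -/
def PoeCompatible {F V : Type} (prec : F → F → Prop) (C : Set F)
    (R : Set (Tm F V × Tm F V)) : Prop :=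
  ∀ p ∈ R, Poe prec C p.1 p.2 ∧
    ∃ f ns ss, p.1 = Tm.app f ns ss ∧ f ∉ C ∧ ∀ t ∈ ns ++ ss, IsConTm C t

/-- `TN`: the set of terms whose normal argument positions hold values. -/
inductive TN {F V : Type} (C : Set F) : Tm F V → Prop where
  | val {t} : IsVal C t → TN C t
  | app {f ns ss} : (∀ v ∈ ns, IsVal C v) → (∀ t ∈ ss, TN C t) →
      TN C (Tm.app f ns ss)

end Tm

/-!
Every term gets a natural-number `potential`: a defined symbol `f` whose normal arguments
have total size `N` costs `2 ^ ((ℓ + 1) ^ (rk f + 1) * (N + 1))`, where `ℓ` bounds the sizes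
of right-hand sides, and safe arguments are added. Call-by-value steps from a basic term keep
all normal arguments values (`TN`), so steps below the root only happen in safe positions,
where the potential is additive. At a root step `lσ → rσ`, every defined node of `rσ` is
`⊐`-below `lσ`: it has smaller rank and at most `ℓ` normal arguments, each no larger than
those of `lσ`, or the same root and strictly smaller normal arguments. Either way it costs at
most `2 ^ (-ℓ)` times the cost of `lσ`, and `r` has at most `ℓ` nodes, so the potential
drops. The length of a derivation is thus bounded by the potential of the starting basic
term, which is `2 ^ O(n)`.
-/

theorem chain_length_le_of_decreasing {α : Type*} {r : α → α → Prop} (P : α → Prop)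
    (μ : α → ℕ) (hstep : ∀ a b, r a b → P a → P b ∧ μ b < μ a) {g : ℕ → α} {m : ℕ}
    (hg : ∀ i < m, r (g i) (g (i + 1))) (h0 : P (g 0)) : m ≤ μ (g 0) := by
  have key : ∀ i ≤ m, P (g i) ∧ μ (g i) + i ≤ μ (g 0) := by
    intro i hi
    induction i with
    | zero => exact ⟨h0, le_rfl⟩
    | succ i ih =>
      obtain ⟨hP, hμ⟩ := ih (by omega)
      obtain ⟨hP', hlt⟩ := hstep _ _ (hg i (by omega)) hP
      exact ⟨hP', by omega⟩
  have := (key m le_rfl).2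
  omega

namespace Tm

variable {F V : Type} {C : Set F} {prec : F → F → Prop} {ℓ : ℕ}

theorem subst_app (σ : V → Tm F V) (f : F) (ns ss : List (Tm F V)) :
    subst σ (app f ns ss) = app f (ns.map (subst σ)) (ss.map (subst σ)) := by
  rw [subst, List.attach_map_val, List.attach_map_val]

def argsSize (ts : List (Tm F V)) : ℕ := (ts.map size).sum

@[simp]
theorem argsSize_nil : argsSize ([] : List (Tm F V)) = 0 := rfl

@[simp]
theorem argsSize_cons (t : Tm F V) (ts : List (Tm F V)) :
    argsSize (t :: ts) = size t + argsSize ts := List.sum_cons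

theorem size_app (f : F) (ns ss : List (Tm F V)) :
    size (app f ns ss) = 1 + (argsSize ns + argsSize ss) := by
  rw [size, List.attach_map_val, List.attach_map_val, argsSize, argsSize]

theorem one_le_size : ∀ t : Tm F V, 1 ≤ size t
  | var _ => by rw [size]
  | app f ns ss => by rw [size_app]; omega

theorem size_le_argsSize {t : Tm F V} {ts : List (Tm F V)} (h : t ∈ ts) :
    size t ≤ argsSize ts :=
  List.le_sum_of_mem (List.mem_map_of_mem h)

theorem length_le_argsSize (ts : List (Tm F V)) : ts.length ≤ argsSize ts := by
  simpa [argsSize] using List.length_le_sum_of_one_le (ts.map size) (by simp [one_le_size])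

theorem size_lt_size_app {f : F} {ns ss : List (Tm F V)} {t : Tm F V} (h : t ∈ ns ++ ss) :
    size t < size (app f ns ss) := by
  rw [size_app]
  rcases List.mem_append.mp h with h | h
  · have := size_le_argsSize h; omega
  · have := size_le_argsSize h; omega

theorem size_subst_lt_size_subst_app (σ : V → Tm F V) {f : F} {ns ss : List (Tm F V)}
    {t : Tm F V} (h : t ∈ ns ++ ss) :
    size (subst σ t) < size (subst σ (app f ns ss)) := by
  rw [subst_app]
  refine size_lt_size_app ?_
  rcases List.mem_append.mp h with h | h
  · exact List.mem_append_left _ (List.mem_map_of_mem h)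
  · exact List.mem_append_right _ (List.mem_map_of_mem h)

theorem size_subst_le_of_subEq {s t : Tm F V} (h : SubEq s t) (σ : V → Tm F V) :
    size (subst σ t) ≤ size (subst σ s) := by
  induction h with
  | refl => exact le_rfl
  | nrm hmem _ ih =>
    exact ih.trans (size_subst_lt_size_subst_app σ (List.mem_append_left _ hmem)).le
  | saf hmem _ ih =>
    exact ih.trans (size_subst_lt_size_subst_app σ (List.mem_append_right _ hmem)).le

theorem IsConTm.isVal_subst {σ : V → Tm F V} (hσ : ∀ v, IsVal C (σ v)) {t : Tm F V}
    (h : IsConTm C t) : IsVal C (subst σ t) := by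
  induction h with
  | var v => rw [subst]; exact hσ v
  | app hf _ ih =>
    rw [subst_app, List.map_nil]
    exact IsVal.app hf fun u hu => by
      obtain ⟨t, ht, rfl⟩ := List.mem_map.mp hu
      exact ih t ht

theorem IsConTm.of_subEq {s t : Tm F V} (h : SubEq s t) (hs : IsConTm C s) : IsConTm C t := by
  induction h with
  | refl => exact hs
  | nrm hmem _ _ => cases hs; simp at hmem
  | saf hmem _ ih => cases hs with | app _ hss => exact ih (hss _ hmem)

theorem IsVal.app_inv {f : F} {ns ss : List (Tm F V)} (h : IsVal C (Tm.app f ns ss)) :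
    f ∈ C ∧ ns = [] ∧ ∀ s ∈ ss, IsVal C s := by
  cases h
  exact ⟨‹_›, rfl, ‹_›⟩

theorem IsVal.not_rew {R : Set (Tm F V × Tm F V)} (hcompat : PoeCompatible prec C R)
    {s t : Tm F V} (hs : IsVal C s) : ¬ Rew C R s t := by
  intro h
  induction h with
  | root σ hlr _ =>
    obtain ⟨_, f, _, _, rfl, hf, _⟩ := hcompat _ hlr
    rw [subst_app] at hs
    exact hf hs.app_inv.1
  | ctxtN => simpa using hs.app_inv.2.1
  | ctxtS _ ih => exact ih (hs.app_inv.2.2 _ (by simp))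

theorem IsConTm.poe {u : Tm F V} (hu : IsConTm C u) {t : Tm F V} (h : Poe prec C u t) :
    IsConTm C t ∧ ∀ σ : V → Tm F V, size (subst σ t) < size (subst σ u) := by
  induction hu generalizing t with
  | var v => cases h
  | app hf hss ih =>
    cases h with
    | sub hmem =>
      rw [List.nil_append] at hmem
      exact ⟨hss t hmem, fun σ =>
        size_subst_lt_size_subst_app σ (List.mem_append_right _ hmem)⟩
    | subtrans hmem hp =>
      rw [List.nil_append] at hmem
      obtain ⟨hcon, hlt⟩ := ih _ hmem hp
      exact ⟨hcon, fun σ =>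
        (hlt σ).trans (size_subst_lt_size_subst_app σ (List.mem_append_right _ hmem))⟩
    | ia hfC _ _ _ => exact absurd hf hfC
    | tsc hfC _ _ => exact absurd hf hfC

theorem PoeGE.isConTm_and_argsSize_le {as bs : List (Tm F V)} (h : PoeGE prec C as bs)
    (has : ∀ a ∈ as, IsConTm C a) :
    (∀ b ∈ bs, IsConTm C b) ∧
      ∀ σ : V → Tm F V, argsSize (bs.map (subst σ)) ≤ argsSize (as.map (subst σ)) := by
  induction as generalizing bs with
  | nil => cases h; simp
  | cons a as ih =>
    have ha := has a List.mem_cons_self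
    have has' := fun x hx => has x (List.mem_cons_of_mem a hx)
    cases h with
    | cons_eq h' =>
      obtain ⟨hcon, hle⟩ := ih h' has'
      exact ⟨by simpa [ha] using hcon, fun σ => by simpa using hle σ⟩
    | cons_lt hab h' =>
      obtain ⟨hcon, hle⟩ := ih h' has'
      obtain ⟨hb, hlt⟩ := ha.poe hab
      refine ⟨by simpa [hb] using hcon, fun σ => ?_⟩
      simpa using Nat.add_le_add (hlt σ).le (hle σ)

theorem PoeProd.isConTm_and_argsSize_lt {as bs : List (Tm F V)} (h : PoeProd prec C as bs)
    (has : ∀ a ∈ as, IsConTm C a) :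
    (∀ b ∈ bs, IsConTm C b) ∧
      ∀ σ : V → Tm F V, argsSize (bs.map (subst σ)) < argsSize (as.map (subst σ)) := by
  induction as generalizing bs with
  | nil => cases h
  | cons a as ih =>
    have ha := has a List.mem_cons_self
    have has' := fun x hx => has x (List.mem_cons_of_mem a hx)
    cases h with
    | strict hab h' =>
      obtain ⟨hcon, hle⟩ := h'.isConTm_and_argsSize_le has'
      obtain ⟨hb, hlt⟩ := ha.poe hab
      refine ⟨by simpa [hb] using hcon, fun σ => ?_⟩
      simpa using Nat.add_lt_add_of_lt_of_le (hlt σ) (hle σ)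
    | cons_eq h' =>
      obtain ⟨hcon, hlt⟩ := ih h' has'
      exact ⟨by simpa [ha] using hcon, fun σ => by simpa using hlt σ⟩
    | cons_lt hab h' =>
      obtain ⟨hcon, hlt'⟩ := ih h' has'
      obtain ⟨hb, hlt⟩ := ha.poe hab
      refine ⟨by simpa [hb] using hcon, fun σ => ?_⟩
      simpa using Nat.add_lt_add (hlt σ) (hlt' σ)

theorem NSub.isConTm_and_size_subst_le {f : F} {ln ls : List (Tm F V)}
    (hln : ∀ a ∈ ln, IsConTm C a) {t : Tm F V} (h : NSub (app f ln ls) t) :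
    IsConTm C t ∧ ∀ σ : V → Tm F V, size (subst σ t) ≤ argsSize (ln.map (subst σ)) := by
  obtain ⟨_, _, _, ⟨⟩, u, hu, hsub⟩ := h
  exact ⟨(hln u hu).of_subEq hsub, fun σ =>
    (size_subst_le_of_subEq hsub σ).trans (size_le_argsSize (List.mem_map_of_mem hu))⟩

theorem TN_subst_app {σ : V → Tm F V} (hσ : ∀ v, IsVal C (σ v)) {g : F}
    {tn ts : List (Tm F V)} (htn : ∀ a ∈ tn, IsConTm C a)
    (hts : ∀ u ∈ ts, TN C (subst σ u)) :
    TN C (subst σ (app g tn ts)) := by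
  rw [subst_app]
  refine .app (fun v hv => ?_) (fun x hx => ?_)
  · obtain ⟨a, ha, rfl⟩ := List.mem_map.mp hv
    exact (htn a ha).isVal_subst hσ
  · obtain ⟨u, hu, rfl⟩ := List.mem_map.mp hx
    exact hts u hu

theorem TN_subst_of_poe {f : F} {ln ls : List (Tm F V)}
    (hcon : ∀ a ∈ ln ++ ls, IsConTm C a) {σ : V → Tm F V} (hσ : ∀ v, IsVal C (σ v))
    {t : Tm F V} (h : Poe prec C (app f ln ls) t) : TN C (subst σ t) := by
  have hln := fun a ha => hcon a (List.mem_append_left ls ha)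
  induction t using (measure size).wf.induction with
  | h t ih =>
  cases h with
  | sub hmem => exact .val ((hcon t hmem).isVal_subst hσ)
  | subtrans hmem hp => exact .val (((hcon _ hmem).poe hp).1.isVal_subst hσ)
  | ia _ _ htn hts =>
    exact TN_subst_app hσ (fun a ha => (NSub.isConTm_and_size_subst_le hln (htn a ha)).1)
      fun u hu => ih u (size_lt_size_app (List.mem_append_right _ hu)) (hts u hu)
  | tsc _ hprod hts =>
    exact TN_subst_app hσ (hprod.isConTm_and_argsSize_lt hln).1
      fun u hu => ih u (size_lt_size_app (List.mem_append_right _ hu)) (hts u hu)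

noncomputable def rank (prec : F → F → Prop) (f : F) : ℕ := {g | prec f g}.ncard

theorem rank_lt_rank [Finite F] (hirr : ∀ f, ¬ prec f f)
    (htrans : ∀ f g h, prec f g → prec g h → prec f h) {f g : F} (hfg : prec f g) :
    rank prec g < rank prec f :=
  Set.ncard_lt_ncard ⟨fun _ hx => htrans _ _ _ hfg hx, fun hsub => hirr g (hsub hfg)⟩

noncomputable def budget (prec : F → F → Prop) (ℓ : ℕ) (f : F) (N : ℕ) : ℕ :=
  (ℓ + 1) ^ (rank prec f + 1) * (N + 1)

theorem budget_add_le_of_prec [Finite F] (hirr : ∀ f, ¬ prec f f)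
    (htrans : ∀ f g h, prec f g → prec g h → prec f h) {f g : F} (hfg : prec f g)
    {N N' : ℕ} (hN : N' ≤ ℓ * N) : budget prec ℓ g N' + ℓ ≤ budget prec ℓ f N := by
  set Q := (ℓ + 1) ^ rank prec f
  have hgQ : (ℓ + 1) ^ (rank prec g + 1) ≤ Q :=
    Nat.pow_le_pow_right (by omega) (rank_lt_rank hirr htrans hfg)
  have hQ : 1 ≤ Q := Nat.one_le_pow _ _ (by omega)
  calc budget prec ℓ g N' + ℓ ≤ Q * (ℓ * N + 1) + Q * (N + ℓ) := by
        unfold budget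
        gcongr ?_ + ?_
        · exact Nat.mul_le_mul hgQ (by omega)
        · nlinarith
    _ = budget prec ℓ f N := by unfold budget; rw [pow_succ]; ring

theorem budget_add_le_of_lt {f : F} {N N' : ℕ} (hN : N' < N) :
    budget prec ℓ f N' + ℓ ≤ budget prec ℓ f N := by
  unfold budget
  have hP : ℓ + 1 ≤ (ℓ + 1) ^ (rank prec f + 1) := Nat.le_self_pow (by omega) _
  nlinarith

theorem budget_le [Finite F] (f : F) {N n : ℕ} (hN : N ≤ n) :
    budget prec ℓ f N ≤ (ℓ + 1) ^ (Nat.card F + 1) * (n + 1) :=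
  Nat.mul_le_mul
    (Nat.pow_le_pow_right (by omega) (by simpa [rank] using Set.ncard_le_card {g | prec f g}))
    (by omega)

open Classical in
/-- A numerical stand-in for `Slow_ℓ` of the paper's predicative interpretation. -/
noncomputable def potential (prec : F → F → Prop) (C : Set F) (ℓ : ℕ) : Tm F V → ℕ
  | var _ => 0
  | app f ns ss => (if f ∈ C then 0 else 2 ^ budget prec ℓ f (argsSize ns)) +
      (ss.map fun s => potential prec C ℓ s).sum

theorem potential_eq_zero_of_isVal {v : Tm F V} (hv : IsVal C v) :
    potential prec C ℓ v = 0 := by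
  induction hv with
  | app hf _ ih =>
    rw [potential, if_pos hf, zero_add]
    exact List.sum_eq_zero fun x hx => by
      obtain ⟨s, hs, rfl⟩ := List.mem_map.mp hx
      exact ih s hs

theorem potential_app_of_isVal {f : F} (hf : f ∉ C) (ns : List (Tm F V)) {ss : List (Tm F V)}
    (hss : ∀ s ∈ ss, IsVal C s) :
    potential prec C ℓ (app f ns ss) = 2 ^ budget prec ℓ f (argsSize ns) := by
  rw [potential, if_neg hf, List.sum_eq_zero, add_zero]
  intro x hx
  obtain ⟨s, hs, rfl⟩ := List.mem_map.mp hx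
  exact potential_eq_zero_of_isVal (hss s hs)

theorem potential_subst_app_mul_le {σ : V → Tm F V} {g : F} {tn ts : List (Tm F V)} {B : ℕ}
    (hg : budget prec ℓ g (argsSize (tn.map (subst σ))) + ℓ ≤ B)
    (hts : ∀ u ∈ ts, potential prec C ℓ (subst σ u) * 2 ^ ℓ ≤ size u * 2 ^ B) :
    potential prec C ℓ (subst σ (app g tn ts)) * 2 ^ ℓ ≤ size (app g tn ts) * 2 ^ B := by
  have hsafe : ((ts.map (subst σ)).map fun s => potential prec C ℓ s).sum * 2 ^ ℓ
      ≤ argsSize ts * 2 ^ B := by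
    rw [List.map_map, ← List.sum_map_mul_right, argsSize, ← List.sum_map_mul_right]
    exact List.sum_le_sum hts
  have hhead : 2 ^ budget prec ℓ g (argsSize (tn.map (subst σ))) * 2 ^ ℓ ≤ 2 ^ B := by
    rw [← pow_add]; exact Nat.pow_le_pow_right two_pos hg
  rw [subst_app, potential, size_app]
  have := Nat.zero_le (argsSize tn * 2 ^ B)
  split_ifs <;> simp only [zero_add, add_mul, one_mul] <;> omega

theorem potential_subst_mul_le_of_poe [Finite F] (hirr : ∀ f, ¬ prec f f)
    (htrans : ∀ f g h, prec f g → prec g h → prec f h) {f : F} {ln ls : List (Tm F V)}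
    (hcon : ∀ a ∈ ln ++ ls, IsConTm C a) {σ : V → Tm F V} (hσ : ∀ v, IsVal C (σ v))
    {t : Tm F V} (h : Poe prec C (app f ln ls) t) (ht : size t ≤ ℓ) :
    potential prec C ℓ (subst σ t) * 2 ^ ℓ ≤
      size t * 2 ^ budget prec ℓ f (argsSize (ln.map (subst σ))) := by
  have hln := fun a ha => hcon a (List.mem_append_left ls ha)
  induction t using (measure size).wf.induction with
  | h t ih =>
  have ih' : ∀ u, size u < size t → Poe prec C (app f ln ls) u →
      potential prec C ℓ (subst σ u) * 2 ^ ℓ ≤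
        size u * 2 ^ budget prec ℓ f (argsSize (ln.map (subst σ))) :=
    fun u hu hpoe => ih u hu hpoe (by omega)
  cases h with
  | sub hmem => simp [potential_eq_zero_of_isVal ((hcon t hmem).isVal_subst hσ)]
  | subtrans hmem hp =>
    simp [potential_eq_zero_of_isVal (((hcon _ hmem).poe hp).1.isVal_subst hσ)]
  | @ia _ g _ _ tn ts _ hfg htn hts =>
    refine potential_subst_app_mul_le (budget_add_le_of_prec hirr htrans hfg ?_)
      fun u hu => ih' u (size_lt_size_app (List.mem_append_right _ hu)) (hts u hu)
    have hlen : tn.length ≤ ℓ := by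
      have := length_le_argsSize tn
      rw [size_app] at ht
      omega
    have hle := List.sum_le_card_nsmul ((tn.map (subst σ)).map size)
      (argsSize (ln.map (subst σ))) fun x hx => by
        simp only [List.map_map, List.mem_map, Function.comp_apply] at hx
        obtain ⟨a, ha, rfl⟩ := hx
        exact (NSub.isConTm_and_size_subst_le hln (htn a ha)).2 σ
    rw [List.length_map, List.length_map, smul_eq_mul] at hle
    exact hle.trans (Nat.mul_le_mul_right _ hlen)
  | tsc _ hprod hts =>
    exact potential_subst_app_mul_le
      (budget_add_le_of_lt ((hprod.isConTm_and_argsSize_lt hln).2 σ))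
      fun u hu => ih' u (size_lt_size_app (List.mem_append_right _ hu)) (hts u hu)

theorem potential_subst_lt_of_mem [Finite F] (hirr : ∀ f, ¬ prec f f)
    (htrans : ∀ f g h, prec f g → prec g h → prec f h) {R : Set (Tm F V × Tm F V)}
    (hcompat : PoeCompatible prec C R) {l r : Tm F V} (hlr : (l, r) ∈ R) (hr : size r ≤ ℓ)
    {σ : V → Tm F V} (hσ : ∀ v, IsVal C (σ v)) :
    potential prec C ℓ (subst σ r) < potential prec C ℓ (subst σ l) := by
  obtain ⟨hpoe, f, ln, ls, rfl, hf, hcon⟩ := hcompat _ hlr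
  have hls : ∀ s ∈ ls.map (subst σ), IsVal C s := fun s hs => by
    obtain ⟨a, ha, rfl⟩ := List.mem_map.mp hs
    exact (hcon a (List.mem_append_right _ ha)).isVal_subst hσ
  rw [subst_app, potential_app_of_isVal hf _ hls]
  refine Nat.lt_of_mul_lt_mul_right (a := 2 ^ ℓ) ?_
  calc potential prec C ℓ (subst σ r) * 2 ^ ℓ
      ≤ size r * 2 ^ budget prec ℓ f (argsSize (ln.map (subst σ))) :=
        potential_subst_mul_le_of_poe hirr htrans hcon hσ hpoe hr
    _ < 2 ^ ℓ * 2 ^ budget prec ℓ f (argsSize (ln.map (subst σ))) :=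
        Nat.mul_lt_mul_of_pos_right (hr.trans_lt Nat.lt_two_pow_self) (by positivity)
    _ = 2 ^ budget prec ℓ f (argsSize (ln.map (subst σ))) * 2 ^ ℓ := mul_comm _ _

theorem Rew.TN_and_potential_lt [Finite F] (hirr : ∀ f, ¬ prec f f)
    (htrans : ∀ f g h, prec f g → prec g h → prec f h) {R : Set (Tm F V × Tm F V)}
    (hcompat : PoeCompatible prec C R) (hR : ∀ p ∈ R, size p.2 ≤ ℓ) {s t : Tm F V}
    (h : Rew C R s t) (hs : TN C s) :
    TN C t ∧ potential prec C ℓ t < potential prec C ℓ s := by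
  induction h with
  | root σ hlr hσ =>
    obtain ⟨hpoe, _, _, _, hl, -, hcon⟩ := hcompat _ hlr
    exact ⟨TN_subst_of_poe hcon hσ (hl ▸ hpoe),
      potential_subst_lt_of_mem hirr htrans hcompat hlr (hR _ hlr) hσ⟩
  | ctxtN hst =>
    exfalso
    cases hs with
    | val hv => simpa using hv.app_inv.2.1
    | app hns _ => exact (hns _ (by simp)).not_rew hcompat hst
  | ctxtS hst ih =>
    cases hs with
    | val hv => exact ((hv.app_inv.2.2 _ (by simp)).not_rew hcompat hst).elim
    | app hns hss =>
      obtain ⟨ht, hlt⟩ := ih (hss _ (by simp))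
      refine ⟨.app hns fun x hx => ?_, ?_⟩
      · simp only [List.mem_append, List.mem_cons] at hx
        rcases hx with hx | rfl | hx
        · exact hss x (by simp [hx])
        · exact ht
        · exact hss x (by simp [hx])
      · simp only [potential, List.map_append, List.map_cons, List.sum_append, List.sum_cons]
        omega

end Tm

open Tm in
/-- Exponential runtime complexity of POE*-compatible systems,
`rc_R(n) ∈ 2^{O(n)}`: there are constants `c, d` such that every call-by-value
derivation starting from a basic term `f(v₁,…,v_{k+l})` of size at most `n`
has length at most `c · 2^{d·n}`. -/
theorem exponential_runtime_complexity {F V : Type} [Finite F] (C : Set F)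
    (prec : F → F → Prop)
    (hirr : ∀ f, ¬ prec f f) (htrans : ∀ f g h, prec f g → prec g h → prec f h)
    (R : Set (Tm F V × Tm F V)) (hfin : R.Finite)
    (hcompat : PoeCompatible prec C R) :
    ∃ c d : ℕ, ∀ (n : ℕ) (f : F) (ns ss : List (Tm F V)) (g : ℕ → Tm F V) (m : ℕ),
      f ∉ C → (∀ v ∈ ns, IsVal C v) → (∀ v ∈ ss, IsVal C v) →
      g 0 = Tm.app f ns ss → size (g 0) ≤ n →
      (∀ i < m, Rew C R (g i) (g (i + 1))) →
      m ≤ c * 2 ^ (d * n) := by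
  obtain ⟨ℓ, hℓ⟩ : ∃ ℓ, ∀ p ∈ R, size p.2 ≤ ℓ := by
    obtain ⟨ℓ, hℓ⟩ := (hfin.image fun p => size p.2).bddAbove
    exact ⟨ℓ, fun p hp => hℓ (Set.mem_image_of_mem _ hp)⟩
  set D := (ℓ + 1) ^ (Nat.card F + 1)
  refine ⟨2 ^ D, D, fun n f ns ss g m hf hns hss hg0 hn hrew => ?_⟩
  have hTN : TN C (g 0) := hg0 ▸ .app hns fun s hs => .val (hss s hs)
  have hns_size : argsSize ns ≤ n := by rw [hg0, size_app] at hn; omega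
  calc m ≤ potential prec C ℓ (g 0) :=
        chain_length_le_of_decreasing (TN C) _
          (fun _ _ h hs => h.TN_and_potential_lt hirr htrans hcompat hℓ hs) hrew hTN
    _ = 2 ^ budget prec ℓ f (argsSize ns) := by rw [hg0, potential_app_of_isVal hf _ hss]
    _ ≤ 2 ^ (D * (n + 1)) := Nat.pow_le_pow_right two_pos (budget_le f hns_size)
    _ = 2 ^ D * 2 ^ (D * n) := by ring
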